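/- Let μ₀ ∈ (0, 1/3] and μᵢ = h(μᵢ₋₁), where h is the inverse of g(x) = (x+x²)/(1+x²) on [0, 1/3]. Then for all i ≥ 3, 1/μᵢ > (4/5)(i + 5/2). -/
import Mathlib


noncomputable def h (y : ℝ) : ℝ := (-1 + Real.sqrt (1 + 4*y*(1-y))) / (2*(1-y))

noncomputable def museq (μ₀ : ℝ) : ℕ → ℝ
  | 0 => μ₀
  | i + 1 => h (museq μ₀ i)

lemma quad_step (x y c c' : ℝ) (hy0 : 0 < y) (hy1 : y ≤ 1/3) (hyc : y ≤ 1/c)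
    (hc1 : 1 ≤ c') (hcc : c'^2 + 1 < c * (c' + 1))
    (hx0 : 0 < x) (hxy : x < y) (hkey : (1-y) * x^2 + x - y = 0) :
    x < 1/c' := by
  have hc'0 : 0 < c' := by linarith
  have hc0 : 0 < c := by nlinarith
  by_contra hcon
  push_neg at hcon
  have hcx : 1 ≤ c' * x := by
    have := (div_le_iff₀ hc'0).mp hcon
    linarith
  have hx1 : x < 1 := by linarith
  have key2 : (c'+1)*(1+x^2) ≤ (c'^2+1)*(x+x^2) := by
    nlinarith [mul_nonneg (by linarith : (0:ℝ) ≤ c'*x - 1)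
      (by nlinarith : (0:ℝ) ≤ c' + 1 + c'*x - x)]
  have heq : y * (1 + x^2) = x + x^2 := by nlinarith [hkey]
  have h1x2 : (0:ℝ) < 1 + x^2 := by positivity
  have h3 : c' + 1 ≤ (c'^2+1) * y := by
    have : (c'+1)*(1+x^2) ≤ ((c'^2+1)*y)*(1+x^2) := by nlinarith [key2, heq]
    exact le_of_mul_le_mul_right this h1x2
  have hcy : y * c ≤ 1 := (le_div_iff₀ hc0).mp hyc
  nlinarith [mul_le_mul_of_nonneg_left h3 hc0.le,
    mul_le_mul_of_nonneg_left hcy (by positivity : (0:ℝ) ≤ c'^2+1)]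

lemma h_step (y c c' : ℝ) (hy0 : 0 < y) (hy1 : y ≤ 1/3) (hyc : y ≤ 1/c)
    (hc1 : 1 ≤ c') (hcc : c'^2 + 1 < c * (c' + 1)) :
    0 < h y ∧ h y < y ∧ h y < 1/c' := by
  have h1y : 0 < 1 - y := by linarith
  have harg : (0:ℝ) ≤ 1 + 4*y*(1-y) := by nlinarith
  have hs2 : (Real.sqrt (1 + 4*y*(1-y)))^2 = 1 + 4*y*(1-y) := Real.sq_sqrt harg
  have hs0 : 0 ≤ Real.sqrt (1 + 4*y*(1-y)) := Real.sqrt_nonneg _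
  have hs1 : 1 < Real.sqrt (1 + 4*y*(1-y)) := by nlinarith [mul_pos hy0 h1y]
  have hxdef : h y = (-1 + Real.sqrt (1 + 4*y*(1-y))) / (2*(1-y)) := rfl
  have hx0 : 0 < h y := by
    rw [hxdef]; apply div_pos <;> linarith
  have h2 : 2*(1-y)*(h y) = Real.sqrt (1 + 4*y*(1-y)) - 1 := by
    rw [hxdef]; field_simp; ring
  have hkey : (1-y) * (h y)^2 + h y - y = 0 := by nlinarith [h2, hs2]
  have hxy : h y < y := by nlinarith [mul_pos h1y (mul_pos hx0 hx0)]
  exact ⟨hx0, hxy, quad_step (h y) y c c' hy0 hy1 hyc hc1 hcc hx0 hxy hkey⟩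

noncomputable def cs : ℕ → ℝ
  | 0 => 3
  | 1 => 3.55
  | 2 => 4.16
  | 3 => 4.81
  | 4 => 5.5
  | 5 => 6.22
  | 6 => 6.96
  | 7 => 7.72
  | (n+8) => (4*(n:ℝ)+42)/5

lemma cs_step : ∀ i : ℕ, 1 ≤ cs (i+1) ∧ (cs (i+1))^2 + 1 < cs i * (cs (i+1) + 1) := by
  intro i
  match i with
  | 0 => norm_num [cs]
  | 1 => norm_num [cs]
  | 2 => norm_num [cs]
  | 3 => norm_num [cs]
  | 4 => norm_num [cs]
  | 5 => norm_num [cs]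
  | 6 => norm_num [cs]
  | 7 => norm_num [cs]
  | (n+8) =>
    have hn : (0:ℝ) ≤ (n:ℝ) := Nat.cast_nonneg n
    constructor
    · show (1:ℝ) ≤ (4*((n+1:ℕ):ℝ)+42)/5
      push_cast; linarith
    · show ((4*((n+1:ℕ):ℝ)+42)/5)^2 + 1 < (4*(n:ℝ)+42)/5 * ((4*((n+1:ℕ):ℝ)+42)/5 + 1)
      push_cast; nlinarith

lemma cs_ge : ∀ i : ℕ, 3 ≤ i → (4/5)*((i:ℝ)+5/2) ≤ cs i := by
  intro i hi
  match i, hi with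
  | 3, _ => norm_num [cs]
  | 4, _ => norm_num [cs]
  | 5, _ => norm_num [cs]
  | 6, _ => norm_num [cs]
  | 7, _ => norm_num [cs]
  | (n+8), _ =>
    show (4/5)*(((n+8:ℕ):ℝ)+5/2) ≤ (4*(n:ℝ)+42)/5
    push_cast; linarith

lemma museq_inv (μ₀ : ℝ) (h0 : 0 < μ₀) (h1 : μ₀ ≤ 1/3) :
    ∀ i, 0 < museq μ₀ i ∧ museq μ₀ i ≤ 1/3 ∧ museq μ₀ i ≤ 1/(cs i) := by
  intro i
  induction i with
  | zero =>
    refine ⟨h0, h1, ?_⟩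
    show μ₀ ≤ 1/(3:ℝ)
    exact h1
  | succ n ih =>
    obtain ⟨p, q, r⟩ := ih
    obtain ⟨hc1, hcc⟩ := cs_step n
    obtain ⟨s1, s2, s3⟩ := h_step (museq μ₀ n) (cs n) (cs (n+1)) p q r hc1 hcc
    have hm : museq μ₀ (n+1) = h (museq μ₀ n) := rfl
    rw [hm]
    exact ⟨s1, by linarith, s3.le⟩

theorem stmt_9 (μ₀ : ℝ) (h0 : 0 < μ₀) (h1 : μ₀ ≤ 1/3) :
    ∀ i : ℕ, 3 ≤ i → 1 / museq μ₀ i > (4/5) * ((i : ℝ) + 5/2) := by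
  intro i hi
  obtain ⟨j, rfl⟩ : ∃ j, i = j + 1 := ⟨i - 1, by omega⟩
  obtain ⟨p, q, r⟩ := museq_inv μ₀ h0 h1 j
  obtain ⟨hc1, hcc⟩ := cs_step j
  obtain ⟨s1, s2, s3⟩ := h_step (museq μ₀ j) (cs j) (cs (j+1)) p q r hc1 hcc
  have hx : museq μ₀ (j+1) = h (museq μ₀ j) := rfl
  rw [hx]
  have hge := cs_ge (j+1) hi
  have hcpos : (0:ℝ) < cs (j+1) := by linarith
  rw [gt_iff_lt, lt_div_iff₀ s1]
  have hxc : h (museq μ₀ j) * cs (j+1) < 1 := by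
    have := (lt_div_iff₀ hcpos).mp s3
    linarith
  have hcoef : (0:ℝ) ≤ (4/5) * ((((j+1:ℕ)):ℝ) + 5/2) := by positivity
  nlinarith [mul_le_mul_of_nonneg_right hge (le_of_lt s1)]
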